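/- arXiv:2005.14367 — 7 statements merged into one kernel-verified Lean document; each statement's English description precedes it below -/
import Mathlib

section
/- Let F be the product of s distinct linear forms in K[x_1,...,x_ℓ] (char K = 0) defining a central essential arrangement, and suppose F = g·h where g and h are products of some of these linear forms, deg(h) = s - M ≥ 2, and all linear factors of g vanish at the point X = (0,...,0,1) while h(X) ≠ 0. Then the derivation θ = Σ_{i=1}^{ℓ-1} (x_i · ∂h/∂x_ℓ) ∂/∂x_i + (x_ℓ · ∂h/∂x_ℓ - s·h) ∂/∂x_ℓ is a nonzero logarithmic derivation of the arrangement of degree s - M that is not a multiple of the Euler derivation. Consequently r(A) ≤ s - M. -/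
open MvPolynomial

section Helpers

variable {σ : Type*} [DecidableEq σ] {K : Type*} [Field K]

omit [DecidableEq σ] in
lemma deg_one_single (m : σ →₀ ℕ) (hm : m.degree = 1) : ∃ j, m = Finsupp.single j 1 := by
  classical
  have hne : m.support.Nonempty := by
    rcases Finset.eq_empty_or_nonempty m.support with h | h
    · exfalso; rw [Finsupp.degree_apply, h] at hm; simp at hm
    · exact h
  obtain ⟨j, hj⟩ := hne
  have hle : m j ≤ m.degree := Finset.single_le_sum (fun i _ => Nat.zero_le _) hj
  have hj1 : 1 ≤ m j := Nat.one_le_iff_ne_zero.mpr (Finsupp.mem_support_iff.mp hj)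
  have hmj : m j = 1 := le_antisymm (hm ▸ hle) hj1
  refine ⟨j, ?_⟩
  ext i
  rcases eq_or_ne i j with rfl | hij
  · simp [hmj]
  · rw [Finsupp.single_eq_of_ne' (Ne.symm hij)]
    by_contra hne0
    have hi : i ∈ m.support := Finsupp.mem_support_iff.mpr hne0
    have : m j + m i ≤ m.degree := by
      rw [Finsupp.degree_apply, ← Finset.sum_erase_add _ _ hj]
      have : m i ≤ ∑ k ∈ m.support.erase j, m k :=
        Finset.single_le_sum (fun i _ => Nat.zero_le _) (Finset.mem_erase.mpr ⟨hij, hi⟩)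
      omega
    omega

variable [Fintype σ]

lemma euler_monomial (m : σ →₀ ℕ) (a : K) (hm : m.degree = 1) :
    ∑ j : σ, X j * pderiv j (monomial m a) = monomial m a := by
  obtain ⟨j0, rfl⟩ := deg_one_single m hm
  rw [Finset.sum_eq_single j0]
  · rw [pderiv_monomial]
    simp only [Finsupp.single_eq_same, Nat.cast_one, mul_one, tsub_self]
    rw [X, monomial_mul]
    simp
  · intro j _ hj
    rw [pderiv_monomial, Finsupp.single_eq_of_ne' (Ne.symm hj)]
    simp
  · simp

lemma euler_lin (f : MvPolynomial σ K) (hf : f.IsHomogeneous 1) :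
    ∑ j : σ, X j * pderiv j f = f := by
  conv_rhs => rw [f.as_sum]
  conv_lhs => rw [f.as_sum]
  simp_rw [map_sum, Finset.mul_sum]
  rw [Finset.sum_comm]
  refine Finset.sum_congr rfl fun m hm => ?_
  refine euler_monomial m _ ?_
  rw [Finsupp.degree_eq_weight_one]
  exact hf (Finsupp.mem_support_iff.mp hm)

omit [Fintype σ] in
lemma pderiv_lin (f : MvPolynomial σ K) (hf : f.IsHomogeneous 1) (i : σ) :
    pderiv i f = C (eval (fun j => if j = i then (1 : K) else 0) f) := by
  conv_lhs => rw [f.as_sum]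
  conv_rhs => rw [f.as_sum]
  rw [map_sum, map_sum, map_sum]
  refine Finset.sum_congr rfl fun m hm => ?_
  have hd1 : m.degree = 1 := by
    rw [Finsupp.degree_eq_weight_one]; exact hf (Finsupp.mem_support_iff.mp hm)
  obtain ⟨j0, rfl⟩ := deg_one_single m hd1
  rw [pderiv_monomial, eval_monomial, Finsupp.prod_single_index (by simp), pow_one]
  rcases eq_or_ne j0 i with rfl | hij
  · rw [if_pos rfl, Finsupp.single_eq_same, tsub_self, C_apply]
    norm_num
  · rw [if_neg hij, Finsupp.single_eq_of_ne' hij]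
    simp

omit [Fintype σ] [DecidableEq σ] in
lemma pderiv_homog (f : MvPolynomial σ K) (n : ℕ) (hf : f.IsHomogeneous n) (i : σ) :
    (pderiv i f).IsHomogeneous (n - 1) := by
  conv => rw [f.as_sum]
  rw [map_sum]
  refine IsHomogeneous.sum _ _ _ fun m hm => ?_
  rw [pderiv_monomial]
  rcases eq_or_ne (m i) 0 with h0 | h0
  · rw [h0]; simpa using isHomogeneous_zero σ K (n - 1)
  · refine isHomogeneous_monomial _ ?_
    have hle : Finsupp.single i 1 ≤ m := Finsupp.single_le_iff.mpr (by omega)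
    have hadd : m - Finsupp.single i 1 + Finsupp.single i 1 = m := tsub_add_cancel_of_le hle
    have hdm : m.degree = n := by
      rw [Finsupp.degree_eq_weight_one]; exact hf (Finsupp.mem_support_iff.mp hm)
    have h1 : (Finsupp.single i 1).degree = 1 := by
      rw [Finsupp.degree_apply, Finsupp.support_single_ne_zero _ one_ne_zero, Finset.sum_singleton,
        Finsupp.single_eq_same]
    have hsum : (m - Finsupp.single i 1).degree + (Finsupp.single i 1).degree = m.degree := by
      rw [Finsupp.degree_eq_weight_one, ← map_add, hadd]
    omega

end Helpers


/-- Remark `upperbound` of the paper.  Let `F = ∏ lᵢ` be a product of `s`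
pairwise non-proportional linear forms in `K[x_1, …, x_ℓ]` (char K = 0), and
`F = g ⬝ h` with `g = ∏_{i ∈ Sg} lᵢ` of degree `M` a product of forms vanishing
at `X = (0, …, 0, 1)` and `h = ∏_{i ∉ Sg} lᵢ`, `deg h = s - M ≥ 2`, `h(X) ≠ 0`.
Then `θ = ∑_{i<ℓ-1} (xᵢ h_{x_ℓ}) ∂ᵢ + (x_ℓ h_{x_ℓ} - s h) ∂_ℓ` is a nonzero
logarithmic derivation of the arrangement, homogeneous of degree `s - M`, not a
multiple of the Euler derivation; consequently `r(A) ≤ s - M`. -/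
theorem stmt2 (K : Type*) [Field K] [CharZero K] (ℓ s M : ℕ) (hl : 2 ≤ ℓ)
    (l : Fin s → MvPolynomial (Fin ℓ) K)
    (hhom : ∀ i, (l i).IsHomogeneous 1)
    (hdist : ∀ i j, i ≠ j → ¬ ∃ c : K, l i = C c * l j)
    (Sg : Finset (Fin s)) (hM : Sg.card = M) (hMs : M ≤ s) (hdeg : 2 ≤ s - M)
    (hg : ∀ i ∈ Sg, eval (fun j : Fin ℓ => if (j : ℕ) = ℓ - 1 then (1 : K) else 0) (l i) = 0)
    (hh : eval (fun j : Fin ℓ => if (j : ℕ) = ℓ - 1 then (1 : K) else 0)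
        (∏ i ∈ Sgᶜ, l i) ≠ 0) :
    (∀ i, ∃ q : MvPolynomial (Fin ℓ) K,
        ∑ j : Fin ℓ,
          (X j * pderiv (⟨ℓ - 1, by omega⟩ : Fin ℓ) (∏ i ∈ Sgᶜ, l i)
            - if j = (⟨ℓ - 1, by omega⟩ : Fin ℓ)
              then (s : MvPolynomial (Fin ℓ) K) * ∏ i ∈ Sgᶜ, l i else 0)
          * pderiv j (l i) = l i * q) ∧
    (∀ j : Fin ℓ,
      (X j * pderiv (⟨ℓ - 1, by omega⟩ : Fin ℓ) (∏ i ∈ Sgᶜ, l i)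
        - if j = (⟨ℓ - 1, by omega⟩ : Fin ℓ)
          then (s : MvPolynomial (Fin ℓ) K) * ∏ i ∈ Sgᶜ, l i else 0).IsHomogeneous (s - M)) ∧
    (¬ ∀ j : Fin ℓ,
      (X j * pderiv (⟨ℓ - 1, by omega⟩ : Fin ℓ) (∏ i ∈ Sgᶜ, l i)
        - if j = (⟨ℓ - 1, by omega⟩ : Fin ℓ)
          then (s : MvPolynomial (Fin ℓ) K) * ∏ i ∈ Sgᶜ, l i else 0) = 0) ∧
    (¬ ∃ c : MvPolynomial (Fin ℓ) K, ∀ j : Fin ℓ,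
      (X j * pderiv (⟨ℓ - 1, by omega⟩ : Fin ℓ) (∏ i ∈ Sgᶜ, l i)
        - if j = (⟨ℓ - 1, by omega⟩ : Fin ℓ)
          then (s : MvPolynomial (Fin ℓ) K) * ∏ i ∈ Sgᶜ, l i else 0) = c * X j) ∧
    sInf {d : ℕ | ∃ P : Fin ℓ → MvPolynomial (Fin ℓ) K,
        (∀ j, (P j).IsHomogeneous d) ∧
        (∀ i, ∃ q, ∑ j : Fin ℓ, P j * pderiv j (l i) = l i * q) ∧
        ¬ ∃ c : MvPolynomial (Fin ℓ) K, ∀ j, P j = c * X j} ≤ s - M := by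
  have hℓ : ℓ - 1 < ℓ := by omega
  set e : Fin ℓ := ⟨ℓ - 1, by omega⟩ with he
  set P : MvPolynomial (Fin ℓ) K := ∏ i ∈ Sgᶜ, l i with hPdef
  set D : MvPolynomial (Fin ℓ) K := pderiv e P with hDdef
  -- the evaluation point
  have hp' : (fun j : Fin ℓ => if (j : ℕ) = ℓ - 1 then (1 : K) else 0)
      = fun j : Fin ℓ => if j = e then (1 : K) else 0 := by
    funext j
    by_cases hj : (j : ℕ) = ℓ - 1
    · rw [if_pos hj, if_pos (Fin.ext hj)]
    · rw [if_neg hj, if_neg (fun hje => hj (by rw [hje]))]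
  have hPne : P ≠ 0 := by
    intro h0
    exact hh (by rw [h0, map_zero])
  have hcard : Sgᶜ.card = s - M := by
    rw [Finset.card_compl, Fintype.card_fin, hM]
  have hPhom : P.IsHomogeneous (s - M) := by
    have := IsHomogeneous.prod Sgᶜ l (fun _ => 1) (fun i _ => hhom i)
    simpa [hcard] using this
  have hDhom : D.IsHomogeneous (s - M - 1) := pderiv_homog P (s - M) hPhom e
  -- key computation
  have key : ∀ i : Fin s,
      ∑ j : Fin ℓ, (X j * D - if j = e then (s : MvPolynomial (Fin ℓ) K) * P else 0)
        * pderiv j (l i)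
      = l i * D - ((s : MvPolynomial (Fin ℓ) K) * P) * pderiv e (l i) := by
    intro i
    have step : ∀ j : Fin ℓ,
        (X j * D - if j = e then (s : MvPolynomial (Fin ℓ) K) * P else 0) * pderiv j (l i)
        = (X j * pderiv j (l i)) * D
          - (if j = e then ((s : MvPolynomial (Fin ℓ) K) * P) * pderiv j (l i) else 0) := by
      intro j; split_ifs <;> ring
    rw [Finset.sum_congr rfl fun j _ => step j, Finset.sum_sub_distrib,
      Finset.sum_ite_eq' Finset.univ e
        (fun j => ((s : MvPolynomial (Fin ℓ) K) * P) * pderiv j (l i)),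
      if_pos (Finset.mem_univ e), ← Finset.sum_mul, euler_lin (l i) (hhom i)]
  -- part 1
  have part1 : ∀ i : Fin s, ∃ q : MvPolynomial (Fin ℓ) K,
      ∑ j : Fin ℓ, (X j * D - if j = e then (s : MvPolynomial (Fin ℓ) K) * P else 0)
        * pderiv j (l i) = l i * q := by
    intro i
    by_cases hi : i ∈ Sg
    · refine ⟨D, ?_⟩
      have hzero : pderiv e (l i) = 0 := by
        rw [pderiv_lin (l i) (hhom i) e, ← hp', hg i hi, map_zero]
      rw [key i, hzero, mul_zero, sub_zero]
    · have hi' : i ∈ Sgᶜ := Finset.mem_compl.mpr hi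
      refine ⟨D - (s : MvPolynomial (Fin ℓ) K) * (∏ k ∈ Sgᶜ.erase i, l k) * pderiv e (l i), ?_⟩
      have hPfac : P = l i * ∏ k ∈ Sgᶜ.erase i, l k := (Finset.mul_prod_erase _ _ hi').symm
      rw [key i, hPfac]; ring
  -- part 2
  have part2 : ∀ j : Fin ℓ,
      (X j * D - if j = e then (s : MvPolynomial (Fin ℓ) K) * P else 0).IsHomogeneous
        (s - M) := by
    intro j
    have h1 : (X j * D).IsHomogeneous (s - M) := by
      have := (isHomogeneous_X K j).mul hDhom
      have hn : 1 + (s - M - 1) = s - M := by omega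
      rw [hn] at this; exact this
    have h2 : ((s : MvPolynomial (Fin ℓ) K) * P).IsHomogeneous (s - M) := by
      rw [← C_eq_coe_nat]
      have := (isHomogeneous_C (Fin ℓ) ((s : ℕ) : K)).mul hPhom
      simpa using this
    by_cases hj : j = e
    · rw [if_pos hj]; exact h1.sub h2
    · rw [if_neg hj, sub_zero]; exact h1
  -- part 4
  have part4 : ¬ ∃ c : MvPolynomial (Fin ℓ) K, ∀ j : Fin ℓ,
      (X j * D - if j = e then (s : MvPolynomial (Fin ℓ) K) * P else 0) = c * X j := by
    rintro ⟨c, hc⟩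
    have hj0 : (⟨0, by omega⟩ : Fin ℓ) ≠ e := by
      intro hje
      have := congrArg Fin.val hje
      simp only [he] at this
      omega
    have h1 := hc ⟨0, by omega⟩
    rw [if_neg hj0, sub_zero, mul_comm c] at h1
    have hD : D = c := mul_left_cancel₀ (X_ne_zero _) h1
    have h2 := hc e
    rw [if_pos rfl, hD, mul_comm (X e) c] at h2
    have hsP : (s : MvPolynomial (Fin ℓ) K) * P = 0 := sub_eq_self.mp h2
    have hs0 : (s : MvPolynomial (Fin ℓ) K) ≠ 0 :=
      Nat.cast_ne_zero.mpr (by omega)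
    rcases mul_eq_zero.mp hsP with h | h
    · exact hs0 h
    · exact hPne h
  refine ⟨part1, part2, ?_, part4, ?_⟩
  · intro hz
    exact part4 ⟨0, fun j => by rw [hz j, zero_mul]⟩
  · exact Nat.sInf_le ⟨fun j => X j * D - if j = e then (s : MvPolynomial (Fin ℓ) K) * P else 0,
      part2, part1, part4⟩
end

section
/- Let A be a rank-ℓ central hyperplane arrangement in K^ℓ and let θ = Σ P_j ∂/∂x_j be a homogeneous logarithmic derivation of A of degree r that is not a polynomial multiple of the Euler derivation. Then every coatom X of A (every point of P^{ℓ-1} that is an intersection of ℓ-1 linearly independent hyperplanes of A) lies on the hypersurface defined by some nonzero polynomial of the form x_k P_j - x_j P_k of degree r + 1. Consequently α_0(A) - 1 ≤ r(A), where α_0(A) is the minimal degree of a hypersurface containing all coatoms. -/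
open MvPolynomial

/-- A coatom of the central arrangement defined by the linear forms `l i`:
a nonzero point of `K^ℓ` (i.e. a point of `ℙ^{ℓ-1}`) which is the intersection
of `ℓ - 1` linearly independent hyperplanes of the arrangement. -/
def IsCoatom3 {K : Type*} [Field K] {ℓ s : ℕ}
    (l : Fin s → MvPolynomial (Fin ℓ) K) (v : Fin ℓ → K) : Prop :=
  v ≠ 0 ∧ ∃ f : Fin (ℓ - 1) → Fin s,
    (∀ k, MvPolynomial.eval v (l (f k)) = 0) ∧
    LinearIndependent K (fun k => l (f k))

section Aux

variable {K : Type*} [Field K] {ℓ : ℕ}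

/-- `X i` is prime in a multivariate polynomial ring over a field. -/
lemma aux_prime_X (i : Fin ℓ) : Prime (X i : MvPolynomial (Fin ℓ) K) := by
  have hℓ : ℓ ≠ 0 := fun h => (h ▸ i).elim0
  obtain ⟨n, rfl⟩ := Nat.exists_eq_succ_of_ne_zero hℓ
  let e := (renameEquiv K (Equiv.swap i 0)).trans (finSuccEquiv K n)
  rw [← MulEquiv.prime_iff e.toMulEquiv]
  have he : e.toMulEquiv (X i) = Polynomial.X := by
    simp [e, renameEquiv_apply, rename_X, Equiv.swap_apply_left, finSuccEquiv_X_zero]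
  rw [he]
  exact Polynomial.prime_X

lemma aux_degree_one_single {m : Fin ℓ →₀ ℕ} (h : Finsupp.degree m = 1) :
    ∃ j, m = Finsupp.single j 1 := by
  classical
  have hs : m.support.Nonempty := by
    rcases Finset.eq_empty_or_nonempty m.support with h0 | h0
    · exfalso
      have : Finsupp.degree m = 0 := by rw [Finsupp.support_eq_empty.1 h0]; simp
      omega
    · exact h0
  obtain ⟨j, hj⟩ := hs
  have hsum : m j + ∑ i ∈ m.support.erase j, m i = 1 := by
    rw [Finset.add_sum_erase _ _ hj]
    exact h
  have hmj : m j ≠ 0 := Finsupp.mem_support_iff.1 hj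
  have hrest : ∑ i ∈ m.support.erase j, m i = 0 := by omega
  have hmj1 : m j = 1 := by omega
  refine ⟨j, ?_⟩
  ext i
  rcases eq_or_ne i j with rfl | hij
  · simp [hmj1]
  · rw [Finsupp.single_apply, if_neg (fun h' => hij h'.symm)]
    by_contra hi
    have hi' : i ∈ m.support.erase j := Finset.mem_erase.2 ⟨hij, Finsupp.mem_support_iff.2 hi⟩
    have := (Finset.sum_eq_zero_iff.1 hrest) i hi'
    exact hi this

/-- A homogeneous polynomial of degree 1 is a linear combination of the variables. -/
lemma aux_hom1_eq {p : MvPolynomial (Fin ℓ) K} (hp : p.IsHomogeneous 1) :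
    p = ∑ j, C (coeff (Finsupp.single j 1) p) * X j := by
  classical
  ext m
  rw [MvPolynomial.coeff_sum]
  simp only [coeff_C_mul, coeff_X']
  by_cases hm : ∃ j, m = Finsupp.single j 1
  · obtain ⟨j, rfl⟩ := hm
    rw [Finset.sum_eq_single j]
    · simp
    · intro b _ hb
      rw [if_neg, mul_zero]
      intro hh
      exact hb ((Finsupp.single_left_inj one_ne_zero).1 hh)
    · intro hj
      exact absurd (Finset.mem_univ j) hj
  · have h0 : coeff m p = 0 := by
      by_contra hc
      have hd : Finsupp.degree m = 1 := by
        by_contra hd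
        exact hc (hp.coeff_eq_zero hd)
      exact hm (aux_degree_one_single hd)
    rw [h0]
    symm
    apply Finset.sum_eq_zero
    intro j _
    rw [if_neg (fun hh => hm ⟨j, hh.symm⟩), mul_zero]

lemma aux_hom1_eval {p : MvPolynomial (Fin ℓ) K} (hp : p.IsHomogeneous 1) (w : Fin ℓ → K) :
    eval w p = ∑ j, coeff (Finsupp.single j 1) p * w j := by
  conv_lhs => rw [aux_hom1_eq hp]
  simp

lemma aux_hom1_pderiv {p : MvPolynomial (Fin ℓ) K} (hp : p.IsHomogeneous 1) (j : Fin ℓ) :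
    pderiv j p = C (coeff (Finsupp.single j 1) p) := by
  classical
  conv_lhs => rw [aux_hom1_eq hp]
  rw [map_sum]
  rw [Finset.sum_eq_single j]
  · simp [pderiv_X]
  · intro b _ hb
    rw [pderiv_C_mul, pderiv_X_of_ne hb, mul_zero]
  · intro hj
    exact absurd (Finset.mem_univ j) hj

end Aux

/-- Remark `lowerbound` of the paper.  If `θ = ∑ Pⱼ ∂ⱼ` is a homogeneous
logarithmic derivation of degree `r` of a rank-`ℓ` central arrangement, not a
polynomial multiple of the Euler derivation, then some `x_k P_j - x_j P_k` is a
nonzero polynomial (of degree `r + 1`), every coatom lies on `V(x_k P_j - x_j P_k)`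
for all `j, k`, and consequently `α₀(A) ≤ r + 1`, i.e. `α₀(A) - 1 ≤ r`. -/
theorem stmt3 (K : Type*) [Field K] [CharZero K] (ℓ s r : ℕ) (hl : 2 ≤ ℓ)
    (l : Fin s → MvPolynomial (Fin ℓ) K)
    (hhom : ∀ i, (l i).IsHomogeneous 1)
    (P : Fin ℓ → MvPolynomial (Fin ℓ) K)
    (hPhom : ∀ j, (P j).IsHomogeneous r)
    (hlog : ∀ i, ∃ q, ∑ j : Fin ℓ, P j * pderiv j (l i) = l i * q)
    (hnE : ¬ ∃ c : MvPolynomial (Fin ℓ) K, ∀ j, P j = c * X j) :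
    (∃ j k : Fin ℓ, X k * P j - X j * P k ≠ 0) ∧
    (∀ v : Fin ℓ → K, IsCoatom3 l v →
      ∀ j k : Fin ℓ, eval v (X k * P j - X j * P k) = 0) ∧
    sInf {d : ℕ | ∃ f : MvPolynomial (Fin ℓ) K, f ≠ 0 ∧ f.totalDegree = d ∧
        ∀ v : Fin ℓ → K, IsCoatom3 l v → eval v f = 0} ≤ r + 1 := by
  classical
  -- Part 1
  have part1 : ∃ j k : Fin ℓ, X k * P j - X j * P k ≠ 0 := by
    by_contra hcon
    push_neg at hcon
    have heq : ∀ j k : Fin ℓ, (X k : MvPolynomial (Fin ℓ) K) * P j = X j * P k :=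
      fun j k => sub_eq_zero.mp (hcon j k)
    set i0 : Fin ℓ := ⟨0, by omega⟩ with hi0
    set i1 : Fin ℓ := ⟨1, by omega⟩ with hi1
    have hne : i0 ≠ i1 := by
      simp [hi0, hi1, Fin.ext_iff]
    have hdvd : (X i0 : MvPolynomial (Fin ℓ) K) ∣ X i1 * P i0 := ⟨P i1, heq i0 i1⟩
    rcases (aux_prime_X i0).2.2 _ _ hdvd with h | h
    · rw [X_dvd_X] at h
      exact hne h
    · obtain ⟨c, hc⟩ := h
      apply hnE
      refine ⟨c, fun j => ?_⟩
      have h2 : (X i0 : MvPolynomial (Fin ℓ) K) * P j = X i0 * (c * X j) := by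
        calc (X i0 : MvPolynomial (Fin ℓ) K) * P j = X j * P i0 := heq j i0
          _ = X j * (X i0 * c) := by rw [hc]
          _ = X i0 * (c * X j) := by ring
      exact mul_left_cancel₀ (X_ne_zero i0) h2
  -- Part 2
  have part2 : ∀ v : Fin ℓ → K, IsCoatom3 l v →
      ∀ j k : Fin ℓ, eval v (X k * P j - X j * P k) = 0 := by
    rintro v ⟨hv0, f, hvf, hlin⟩
    set M : Matrix (Fin (ℓ - 1)) (Fin ℓ) K :=
      fun k j => coeff (Finsupp.single j 1) (l (f k)) with hM
    have hMli : LinearIndependent K M := by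
      rw [Fintype.linearIndependent_iff]
      intro g hg
      have hqh : (∑ k, g k • l (f k)).IsHomogeneous 1 := by
        rw [← mem_homogeneousSubmodule]
        exact Submodule.sum_mem _ fun k _ => Submodule.smul_mem _ _ (hhom (f k))
      have hcoeff : ∀ j, coeff (Finsupp.single j 1) (∑ k, g k • l (f k)) = 0 := by
        intro j
        have h1 : coeff (Finsupp.single j 1) (∑ k, g k • l (f k)) = ∑ k, g k * M k j := by
          rw [MvPolynomial.coeff_sum]
          simp [coeff_smul, hM, smul_eq_mul]
        rw [h1]
        have h2 := congrFun hg j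
        simpa using h2
      have hq : (∑ k, g k • l (f k)) = 0 := by
        rw [aux_hom1_eq hqh]
        apply Finset.sum_eq_zero
        intro j _
        rw [hcoeff j]
        simp
      exact Fintype.linearIndependent_iff.mp hlin g hq
    have hrank : M.rank = ℓ - 1 := by
      have := hMli.rank_matrix
      simp only [Fintype.card_fin] at this; exact this
    have hker : Module.finrank K (LinearMap.ker M.mulVecLin) = 1 := by
      have h1 := LinearMap.finrank_range_add_finrank_ker M.mulVecLin
      have h2 : Module.finrank K (Fin ℓ → K) = ℓ := by simp
      have h3 : Module.finrank K (LinearMap.range M.mulVecLin) = ℓ - 1 := hrank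
      rw [h2, h3] at h1
      omega
    have heval : ∀ (w : Fin ℓ → K) (k : Fin (ℓ - 1)),
        M.mulVecLin w k = eval w (l (f k)) := by
      intro w k
      rw [aux_hom1_eval (hhom (f k)) w]
      rw [Matrix.mulVecLin_apply]
      simp [Matrix.mulVecLin_apply, Matrix.mulVec, dotProduct, hM]
    have hv_mem : v ∈ LinearMap.ker M.mulVecLin := by
      rw [LinearMap.mem_ker]
      funext k
      rw [heval v k, hvf k]
      rfl
    have hP_mem : (fun j => eval v (P j)) ∈ LinearMap.ker M.mulVecLin := by
      rw [LinearMap.mem_ker]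
      funext k
      obtain ⟨q, hq⟩ := hlog (f k)
      have h4 := congrArg (eval v) hq
      rw [map_sum, map_mul] at h4
      have h5 : ∀ j, eval v (pderiv j (l (f k))) = M k j := by
        intro j
        rw [aux_hom1_pderiv (hhom (f k)) j]
        simp [hM]
      rw [hvf k, zero_mul] at h4
      have h6 : ∑ j, eval v (P j) * M k j = 0 := by
        rw [← h4]
        apply Finset.sum_congr rfl
        intro j _
        rw [map_mul, h5 j]
      show M.mulVecLin (fun j => eval v (P j)) k = (0 : Fin (ℓ - 1) → K) k
      simp only [Matrix.mulVecLin_apply, Matrix.mulVec, dotProduct, Pi.zero_apply]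
      rw [← h6]
      apply Finset.sum_congr rfl
      intro j _
      ring
    have hvne : (⟨v, hv_mem⟩ : LinearMap.ker M.mulVecLin) ≠ 0 := by
      simpa [Submodule.mk_eq_zero] using hv0
    obtain ⟨c, hc⟩ :=
      (finrank_eq_one_iff_of_nonzero' (⟨v, hv_mem⟩ : LinearMap.ker M.mulVecLin) hvne).mp hker
        ⟨(fun j => eval v (P j)), hP_mem⟩
    have hc' : ∀ j, c * v j = eval v (P j) := by
      intro j
      have := congrArg Subtype.val hc
      exact congrFun this j
    intro j k
    rw [map_sub, map_mul, map_mul, eval_X, eval_X, ← hc' j, ← hc' k]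
    ring
  refine ⟨part1, part2, ?_⟩
  -- Part 3
  obtain ⟨j, k, hjk⟩ := part1
  apply Nat.sInf_le
  refine ⟨X k * P j - X j * P k, hjk, ?_, fun v hv => part2 v hv j k⟩
  have hh : (X k * P j - X j * P k).IsHomogeneous (r + 1) := by
    apply MvPolynomial.IsHomogeneous.sub
    · simpa [add_comm] using (isHomogeneous_X K k).mul (hPhom j)
    · simpa [add_comm] using (isHomogeneous_X K j).mul (hPhom k)
  exact hh.totalDegree hjk
end

section
/- For the arrangement A in P^2 with defining polynomial F = xyz(x+y)(x+z)(−x+z)(y+z)(−y+z), the derivation θ = (y² − x²)·y·∂/∂y + (z² − x²)·z·∂/∂z is a logarithmic derivation of degree 3 that is not a polynomial multiple of the Euler derivation. -/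
open MvPolynomial

/-- For the line arrangement in `ℙ²` with defining polynomial
`F = xyz(x+y)(x+z)(−x+z)(y+z)(−y+z)`, the derivation
`θ = (y² − x²) y ∂/∂y + (z² − x²) z ∂/∂z` is a logarithmic derivation of
degree 3 that is not a polynomial multiple of the Euler derivation. -/
theorem stmt10 (K : Type*) [Field K] [CharZero K] :
    (∀ l ∈ ([X 0, X 1, X 2, X 0 + X 1, X 0 + X 2, -X 0 + X 2, X 1 + X 2,
        -X 1 + X 2] : List (MvPolynomial (Fin 3) K)),
      ∃ q, ((X 1 ^ 2 - X 0 ^ 2) * X 1) * pderiv 1 l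
          + ((X 2 ^ 2 - X 0 ^ 2) * X 2) * pderiv 2 l = l * q) ∧
    ((X 1 ^ 2 - X 0 ^ 2) * X 1 : MvPolynomial (Fin 3) K).IsHomogeneous 3 ∧
    ((X 2 ^ 2 - X 0 ^ 2) * X 2 : MvPolynomial (Fin 3) K).IsHomogeneous 3 ∧
    ¬ ∃ c : MvPolynomial (Fin 3) K,
      (0 : MvPolynomial (Fin 3) K) = c * X 0 ∧
      (X 1 ^ 2 - X 0 ^ 2) * X 1 = c * X 1 ∧
      (X 2 ^ 2 - X 0 ^ 2) * X 2 = c * X 2 := by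
  refine ⟨?_, ?_, ?_, ?_⟩
  · intro l hl
    simp only [List.mem_cons, List.not_mem_nil, or_false] at hl
    rcases hl with rfl | rfl | rfl | rfl | rfl | rfl | rfl | rfl
    · exact ⟨0, by simp [pderiv_X, Pi.single_apply]⟩
    · exact ⟨X 1 ^ 2 - X 0 ^ 2, by simp [pderiv_X, Pi.single_apply]; ring⟩
    · exact ⟨X 2 ^ 2 - X 0 ^ 2, by simp [pderiv_X, Pi.single_apply]; ring⟩
    · exact ⟨(X 1 - X 0) * X 1, by
        simp [pderiv_X, Pi.single_apply]; ring⟩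
    · exact ⟨(X 2 - X 0) * X 2, by
        simp [pderiv_X, Pi.single_apply]; ring⟩
    · exact ⟨(X 2 + X 0) * X 2, by
        simp [pderiv_X, Pi.single_apply]; ring⟩
    · exact ⟨X 1 ^ 2 - X 1 * X 2 + X 2 ^ 2 - X 0 ^ 2, by
        simp [pderiv_X, Pi.single_apply]; ring⟩
    · exact ⟨X 1 ^ 2 + X 1 * X 2 + X 2 ^ 2 - X 0 ^ 2, by
        simp [pderiv_X, Pi.single_apply]; ring⟩
  · exact (((isHomogeneous_X K 1).pow 2).sub ((isHomogeneous_X K 0).pow 2)).mul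
      (isHomogeneous_X K 1)
  · exact (((isHomogeneous_X K 2).pow 2).sub ((isHomogeneous_X K 0).pow 2)).mul
      (isHomogeneous_X K 2)
  · rintro ⟨c, h0, h1, h2⟩
    have hc : c = 0 := by
      rcases mul_eq_zero.mp h0.symm with h | h
      · exact h
      · exact absurd h (X_ne_zero 0)
    subst hc
    have := congrArg (eval (fun i => if i = 1 then (1 : K) else 0)) h1
    simp at this
end

section
/- For the arrangement A in P^2 with defining polynomial F = xyz(x+y)∏_{j=4}^s (t_j y + z) with all t_j ≠ 0 and s ≥ 5, the derivation θ = (x+y)(y ∂/∂y + z ∂/∂z) is a quadratic logarithmic derivation of A that is not a multiple of the Euler derivation. -/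
open MvPolynomial

/-- For the arrangement with defining polynomial
`F = xyz(x+y) ∏_{j=4}^s (tⱼ y + z)`, all `tⱼ ≠ 0` distinct, `s ≥ 5`, the
derivation `θ = (x+y)(y ∂/∂y + z ∂/∂z)` is a quadratic logarithmic derivation
that is not a multiple of the Euler derivation. -/
theorem stmt11 (K : Type*) [Field K] [CharZero K] (s : ℕ) (hs : 5 ≤ s)
    (t : Fin (s - 3) → K) (ht : ∀ j, t j ≠ 0) (htinj : Function.Injective t) :
    (∀ l ∈ ([X 0, X 1, X 2, X 0 + X 1] : List (MvPolynomial (Fin 3) K)),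
      ∃ q, ((X 0 + X 1) * X 1) * pderiv 1 l
          + ((X 0 + X 1) * X 2) * pderiv 2 l = l * q) ∧
    (∀ j : Fin (s - 3),
      ∃ q, ((X 0 + X 1) * X 1) * pderiv 1 (C (t j) * X 1 + X 2)
          + ((X 0 + X 1) * X 2) * pderiv 2 (C (t j) * X 1 + X 2)
          = (C (t j) * X 1 + X 2) * q) ∧
    ((X 0 + X 1) * X 1 : MvPolynomial (Fin 3) K).IsHomogeneous 2 ∧
    ((X 0 + X 1) * X 2 : MvPolynomial (Fin 3) K).IsHomogeneous 2 ∧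
    ¬ ∃ c : MvPolynomial (Fin 3) K,
      (0 : MvPolynomial (Fin 3) K) = c * X 0 ∧
      (X 0 + X 1) * X 1 = c * X 1 ∧
      (X 0 + X 1) * X 2 = c * X 2 := by
  refine ⟨?_, ?_, ?_, ?_, ?_⟩
  · intro l hl
    simp only [List.mem_cons, List.mem_singleton] at hl
    rcases hl with rfl | rfl | rfl | rfl | h
    · exact ⟨0, by simp⟩
    · exact ⟨X 0 + X 1, by simp [pderiv_X]; ring⟩
    · exact ⟨X 0 + X 1, by simp [pderiv_X]; ring⟩
    · exact ⟨X 1, by simp [pderiv_X]⟩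
    · simp at h
  · intro j
    refine ⟨X 0 + X 1, ?_⟩
    simp [pderiv_X]
    ring
  · exact ((isHomogeneous_X _ _).add (isHomogeneous_X _ _)).mul (isHomogeneous_X _ _)
  · exact ((isHomogeneous_X _ _).add (isHomogeneous_X _ _)).mul (isHomogeneous_X _ _)
  · rintro ⟨c, h0, h1, _⟩
    have hc : c = 0 := by
      have := h0.symm
      rcases mul_eq_zero.mp this with h | h
      · exact h
      · exact absurd h (X_ne_zero 0)
    rw [hc, zero_mul] at h1
    have : (X 0 + X 1) * X 1 ≠ (0 : MvPolynomial (Fin 3) K) := by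
      apply mul_ne_zero _ (X_ne_zero 1)
      intro h
      have := congrArg (eval (fun i => if i = 1 then (1:K) else 0)) h
      simp at this
    exact this h1
end

section
/- For the arrangement A in P^2 with defining polynomial F = xyz(x+y+z)∏_{j=4}^s (t_j y + z) with all t_j ≠ 0, 1, the derivation θ = (x+y+z)(y ∂/∂y + z ∂/∂z) is a quadratic logarithmic derivation of A that is not a multiple of the Euler derivation. -/
open MvPolynomial

/-- For the arrangement with defining polynomial
`F = xyz(x+y+z) ∏_{j=4}^s (tⱼ y + z)`, all `tⱼ ≠ 0, 1` distinct, the derivation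
`θ = (x+y+z)(y ∂/∂y + z ∂/∂z)` is a quadratic logarithmic derivation that is
not a multiple of the Euler derivation. -/
theorem stmt12 (K : Type*) [Field K] [CharZero K] (s : ℕ) (hs : 4 ≤ s)
    (t : Fin (s - 3) → K) (ht0 : ∀ j, t j ≠ 0) (ht1 : ∀ j, t j ≠ 1)
    (htinj : Function.Injective t) :
    (∀ l ∈ ([X 0, X 1, X 2, X 0 + X 1 + X 2] : List (MvPolynomial (Fin 3) K)),
      ∃ q, ((X 0 + X 1 + X 2) * X 1) * pderiv 1 l
          + ((X 0 + X 1 + X 2) * X 2) * pderiv 2 l = l * q) ∧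
    (∀ j : Fin (s - 3),
      ∃ q, ((X 0 + X 1 + X 2) * X 1) * pderiv 1 (C (t j) * X 1 + X 2)
          + ((X 0 + X 1 + X 2) * X 2) * pderiv 2 (C (t j) * X 1 + X 2)
          = (C (t j) * X 1 + X 2) * q) ∧
    ((X 0 + X 1 + X 2) * X 1 : MvPolynomial (Fin 3) K).IsHomogeneous 2 ∧
    ((X 0 + X 1 + X 2) * X 2 : MvPolynomial (Fin 3) K).IsHomogeneous 2 ∧
    ¬ ∃ c : MvPolynomial (Fin 3) K,
      (0 : MvPolynomial (Fin 3) K) = c * X 0 ∧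
      (X 0 + X 1 + X 2) * X 1 = c * X 1 ∧
      (X 0 + X 1 + X 2) * X 2 = c * X 2 := by
  refine ⟨?_, ?_, ?_, ?_, ?_⟩
  · intro l hl
    simp only [List.mem_cons, List.mem_singleton, List.not_mem_nil, or_false] at hl
    rcases hl with rfl | rfl | rfl | rfl
    · exact ⟨0, by simp⟩
    · exact ⟨X 0 + X 1 + X 2, by simp [pderiv_X]; ring⟩
    · exact ⟨X 0 + X 1 + X 2, by simp [pderiv_X]; ring⟩
    · exact ⟨X 1 + X 2, by simp [pderiv_X]; ring⟩
  · intro j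
    exact ⟨X 0 + X 1 + X 2, by simp [pderiv_X]; ring⟩
  · exact (((isHomogeneous_X K 0).add (isHomogeneous_X K 1)).add (isHomogeneous_X K 2)).mul (isHomogeneous_X K 1)
  · exact (((isHomogeneous_X K 0).add (isHomogeneous_X K 1)).add (isHomogeneous_X K 2)).mul (isHomogeneous_X K 2)
  · rintro ⟨c, h0, h1, h2⟩
    have hc : c = 0 := by
      have := h0.symm
      rcases mul_eq_zero.mp this with h | h
      · exact h
      · exact absurd h (X_ne_zero 0)
    rw [hc, zero_mul] at h1
    have : (X 0 + X 1 + X 2 : MvPolynomial (Fin 3) K) ≠ 0 := by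
      intro h
      have := congrArg (eval fun _ => (1 : K)) h
      norm_num at this
    exact absurd h1 (mul_ne_zero this (X_ne_zero 1))
end

section
/- For the arrangement A in P^2 with defining polynomial F = xyz(x+y+z)(x+z)(y+z), the derivation θ = (x+y+2z)·y·∂/∂y + (x+z)·z·∂/∂z is a quadratic logarithmic derivation of A that is not a multiple of the Euler derivation. -/
open MvPolynomial

/-- For the arrangement with defining polynomial `F = xyz(x+y+z)(x+z)(y+z)`,
the derivation `θ = (x+y+2z) y ∂/∂y + (x+z) z ∂/∂z` is a quadratic logarithmic
derivation that is not a multiple of the Euler derivation. -/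
theorem stmt13 (K : Type*) [Field K] [CharZero K] :
    (∀ l ∈ ([X 0, X 1, X 2, X 0 + X 1 + X 2, X 0 + X 2, X 1 + X 2] :
        List (MvPolynomial (Fin 3) K)),
      ∃ q, ((X 0 + X 1 + 2 * X 2) * X 1) * pderiv 1 l
          + ((X 0 + X 2) * X 2) * pderiv 2 l = l * q) ∧
    ((X 0 + X 1 + 2 * X 2) * X 1 : MvPolynomial (Fin 3) K).IsHomogeneous 2 ∧
    ((X 0 + X 2) * X 2 : MvPolynomial (Fin 3) K).IsHomogeneous 2 ∧
    ¬ ∃ c : MvPolynomial (Fin 3) K,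
      (0 : MvPolynomial (Fin 3) K) = c * X 0 ∧
      (X 0 + X 1 + 2 * X 2) * X 1 = c * X 1 ∧
      (X 0 + X 2) * X 2 = c * X 2 := by
  refine ⟨?_, ?_, ?_, ?_⟩
  · intro l hl
    fin_cases hl
    · exact ⟨0, by simp [pderiv_X]⟩
    · exact ⟨X 0 + X 1 + 2 * X 2, by simp [pderiv_X]; ring⟩
    · exact ⟨X 0 + X 2, by simp [pderiv_X]; ring⟩
    · exact ⟨X 1 + X 2, by simp [pderiv_X, Pi.single_apply]; ring⟩
    · exact ⟨X 2, by simp [pderiv_X, Pi.single_apply]⟩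
    · exact ⟨X 0 + X 1 + X 2, by simp [pderiv_X, Pi.single_apply]; ring⟩
  · have : ((X 0 + X 1 + 2 * X 2) * X 1 : MvPolynomial (Fin 3) K).IsHomogeneous (1 + 1) :=
      (((isHomogeneous_X K 0).add (isHomogeneous_X K 1)).add
        ((isHomogeneous_C_mul_X (2 : K) 2))).mul (isHomogeneous_X K 1)
    simpa using this
  · have : ((X 0 + X 2) * X 2 : MvPolynomial (Fin 3) K).IsHomogeneous (1 + 1) :=
      ((isHomogeneous_X K 0).add (isHomogeneous_X K 2)).mul (isHomogeneous_X K 2)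
    simpa using this
  · rintro ⟨c, h0, h1, h2⟩
    have hc : c = 0 := by
      have := h0.symm
      rcases mul_eq_zero.mp this with h | h
      · exact h
      · exact absurd h (X_ne_zero 0)
    rw [hc, zero_mul] at h1
    have : (X 0 + X 1 + 2 * X 2 : MvPolynomial (Fin 3) K) = 0 ∨
        (X 1 : MvPolynomial (Fin 3) K) = 0 := mul_eq_zero.mp h1
    rcases this with h | h
    · have := congrArg (eval ![0, 1, 0]) h
      simp at this
    · exact X_ne_zero 1 h
end

section
/- Let A be a rank-3 line arrangement in P^2 with |A| = s lines, and suppose m(A) = s − 2 (i.e., some point lies on all but two lines). Then r(A) ≤ 2. More precisely, the construction of Remark 'upperbound' with the coatom of multiplicity M = s−2 produces a logarithmic derivation of degree s − M = 2 that is not a multiple of the Euler derivation (since deg h = 2 and h is a product of two distinct linear forms, h and ∂h/∂z share no linear factor). -/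
open MvPolynomial

lemma deg1_rep {K : Type*} [Field K] {p : MvPolynomial (Fin 3) K} (hp : p.IsHomogeneous 1) :
    ∃ a b c : K, p = C a * X 0 + C b * X 1 + C c * X 2 := by
  refine ⟨coeff (Finsupp.single 0 1) p, coeff (Finsupp.single 1 1) p,
    coeff (Finsupp.single 2 1) p, ?_⟩
  ext m
  have hdeg : ∀ d : Fin 3 →₀ ℕ, d 0 + d 1 + d 2 ≠ 1 → coeff d p = 0 := by
    intro d hd
    refine hp.coeff_eq_zero ?_
    have : d.degree = d 0 + d 1 + d 2 := by
      rw [Finsupp.degree_apply, Finset.sum_subset (Finset.subset_univ d.support)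
        (fun x _ hx => Finsupp.notMem_support_iff.mp hx), Fin.sum_univ_three]
    omega
  by_cases hm : m 0 + m 1 + m 2 = 1
  · have : m = Finsupp.single 0 1 ∨ m = Finsupp.single 1 1 ∨ m = Finsupp.single 2 1 := by
      have h0 : m 0 = 1 ∧ m 1 = 0 ∧ m 2 = 0 ∨ m 0 = 0 ∧ m 1 = 1 ∧ m 2 = 0 ∨
          m 0 = 0 ∧ m 1 = 0 ∧ m 2 = 1 := by omega
      rcases h0 with ⟨h0, h1, h2⟩ | ⟨h0, h1, h2⟩ | ⟨h0, h1, h2⟩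
      · left; ext j; fin_cases j <;> simp [h0, h1, h2, Finsupp.single_apply]
      · right; left; ext j; fin_cases j <;> simp [h0, h1, h2, Finsupp.single_apply]
      · right; right; ext j; fin_cases j <;> simp [h0, h1, h2, Finsupp.single_apply]
    rcases this with rfl | rfl | rfl <;>
      simp [coeff_C_mul, coeff_X', Finsupp.single_eq_single_iff]
  · rw [hdeg m hm]
    have h0 : ¬ (Finsupp.single (0 : Fin 3) 1 = m) := by
      rintro rfl; simp [Finsupp.single_apply] at hm
    have h1 : ¬ (Finsupp.single (1 : Fin 3) 1 = m) := by
      rintro rfl; simp [Finsupp.single_apply] at hm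
    have h2 : ¬ (Finsupp.single (2 : Fin 3) 1 = m) := by
      rintro rfl; simp [Finsupp.single_apply] at hm
    simp [coeff_C_mul, coeff_X', h0, h1, h2]

/-- Let `A` be a rank-3 central line arrangement of `s` pairwise
non-proportional linear forms in `K[x,y,z]`, such that the point `X = (0,0,1)`
lies on exactly `s - 2` of the lines (so `m(A) = s - 2`): the forms indexed by
`Sg` vanish at `X` and the two remaining forms do not.  Writing
`h = ∏_{i ∉ Sg} lᵢ` (of degree 2), the derivation
`θ = (x h_z) ∂/∂x + (y h_z) ∂/∂y + (z h_z − s h) ∂/∂z` is a logarithmic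
derivation of degree `2 = s − (s−2)`, not a multiple of the Euler derivation;
consequently `r(A) ≤ 2`. -/
theorem stmt19 (K : Type*) [Field K] [CharZero K] (s : ℕ) (hs : 4 ≤ s)
    (l : Fin s → MvPolynomial (Fin 3) K)
    (hhom : ∀ i, (l i).IsHomogeneous 1)
    (hdist : ∀ i j, i ≠ j → ¬ ∃ c : K, l i = C c * l j)
    (hrank : ¬ ∃ v : Fin 3 → K, v ≠ 0 ∧ ∀ i, eval v (l i) = 0)
    (Sg : Finset (Fin s)) (hSg : Sg.card = s - 2)
    (hg : ∀ i ∈ Sg, eval ![(0 : K), 0, 1] (l i) = 0)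
    (hh : ∀ i ∈ Sgᶜ, eval ![(0 : K), 0, 1] (l i) ≠ 0) :
    (∀ i, ∃ q : MvPolynomial (Fin 3) K,
        ∑ j : Fin 3,
          (X j * pderiv 2 (∏ i ∈ Sgᶜ, l i)
            - if j = 2 then (s : MvPolynomial (Fin 3) K) * ∏ i ∈ Sgᶜ, l i else 0)
          * pderiv j (l i) = l i * q) ∧
    (∀ j : Fin 3,
      (X j * pderiv 2 (∏ i ∈ Sgᶜ, l i)
        - if j = 2 then (s : MvPolynomial (Fin 3) K) * ∏ i ∈ Sgᶜ, l i
          else 0).IsHomogeneous 2) ∧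
    (¬ ∃ c : MvPolynomial (Fin 3) K, ∀ j : Fin 3,
      (X j * pderiv 2 (∏ i ∈ Sgᶜ, l i)
        - if j = 2 then (s : MvPolynomial (Fin 3) K) * ∏ i ∈ Sgᶜ, l i else 0)
        = c * X j) ∧
    sInf {d : ℕ | ∃ P : Fin 3 → MvPolynomial (Fin 3) K,
        (∀ j, (P j).IsHomogeneous d) ∧
        (∀ i, ∃ q, ∑ j : Fin 3, P j * pderiv j (l i) = l i * q) ∧
        ¬ ∃ c : MvPolynomial (Fin 3) K, ∀ j, P j = c * X j} ≤ 2 := by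
  -- the complement has exactly two elements
  have hcard : Sgᶜ.card = 2 := by
    rw [Finset.card_compl, hSg, Fintype.card_fin]
    have : Sg.card ≤ s := by rw [hSg]; omega
    omega
  obtain ⟨a, b, hab, hSgc⟩ := Finset.card_eq_two.mp hcard
  have ha' : a ∈ Sgᶜ := by rw [hSgc]; simp
  have hb' : b ∈ Sgᶜ := by rw [hSgc]; simp
  have hprod : (∏ i ∈ Sgᶜ, l i) = l a * l b := by rw [hSgc, Finset.prod_pair hab]
  obtain ⟨a0, a1, a2, hA⟩ := deg1_rep (hhom a)
  obtain ⟨b0, b1, b2, hB⟩ := deg1_rep (hhom b)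
  have pdA : pderiv 2 (l a) = C a2 := by rw [hA]; simp
  have pdB : pderiv 2 (l b) = C b2 := by rw [hB]; simp
  have hz_eq : pderiv 2 (∏ i ∈ Sgᶜ, l i) = C a2 * l b + C b2 * l a := by
    rw [hprod, pderiv_mul, pdA, pdB]; ring
  have hla_ne : l a ≠ 0 := by
    intro h0; exact hh a ha' (by rw [h0]; simp)
  have hlb_ne : l b ≠ 0 := by
    intro h0; exact hh b hb' (by rw [h0]; simp)
  have hprod_ne : (∏ i ∈ Sgᶜ, l i) ≠ 0 := by
    rw [hprod]; exact mul_ne_zero hla_ne hlb_ne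
  have hs_ne : (s : MvPolynomial (Fin 3) K) ≠ 0 := by
    exact_mod_cast Nat.cast_ne_zero.mpr (by omega : s ≠ 0)
  -- Part 1 : logarithmic derivation
  have pdA0 : pderiv 0 (l a) = C a0 := by rw [hA]; simp
  have pdA1 : pderiv 1 (l a) = C a1 := by rw [hA]; simp
  have pdB0 : pderiv 0 (l b) = C b0 := by rw [hB]; simp
  have pdB1 : pderiv 1 (l b) = C b1 := by rw [hB]; simp
  have P1 : ∀ i, ∃ q : MvPolynomial (Fin 3) K,
      ∑ j : Fin 3,
        (X j * pderiv 2 (∏ i ∈ Sgᶜ, l i)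
          - if j = 2 then (s : MvPolynomial (Fin 3) K) * ∏ i ∈ Sgᶜ, l i else 0)
        * pderiv j (l i) = l i * q := by
    intro i
    by_cases hi : i ∈ Sg
    · obtain ⟨c0, c1, c2, hC⟩ := deg1_rep (hhom i)
      have pd0 : pderiv 0 (l i) = C c0 := by rw [hC]; simp
      have pd1 : pderiv 1 (l i) = C c1 := by rw [hC]; simp
      have pd2 : pderiv 2 (l i) = C c2 := by rw [hC]; simp
      have hc2 : c2 = 0 := by
        have := hg i hi
        rw [hC] at this
        simpa using this
      refine ⟨C a2 * l b + C b2 * l a, ?_⟩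
      rw [Fin.sum_univ_three, hz_eq, pd0, pd1, pd2, hC, hprod, hc2]
      simp only [map_zero, if_neg (show (0 : Fin 3) ≠ 2 by decide),
        if_neg (show (1 : Fin 3) ≠ 2 by decide), if_pos rfl, if_true]
      ring
    · -- i = a or i = b
      have hi' : i ∈ Sgᶜ := Finset.mem_compl.mpr hi
      rw [hSgc, Finset.mem_insert, Finset.mem_singleton] at hi'
      rcases hi' with rfl | rfl
      · refine ⟨C a2 * l b + C b2 * l i
            - (s : MvPolynomial (Fin 3) K) * C a2 * l b, ?_⟩
        rw [Fin.sum_univ_three, hz_eq, pdA0, pdA1, pdA, hprod, hA]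
        simp only [if_neg (show (0 : Fin 3) ≠ 2 by decide),
          if_neg (show (1 : Fin 3) ≠ 2 by decide), if_pos rfl, if_true]
        ring
      · refine ⟨C a2 * l i + C b2 * l a
            - (s : MvPolynomial (Fin 3) K) * C b2 * l a, ?_⟩
        rw [Fin.sum_univ_three, hz_eq, pdB0, pdB1, pdB, hprod, hB]
        simp only [if_neg (show (0 : Fin 3) ≠ 2 by decide),
          if_neg (show (1 : Fin 3) ≠ 2 by decide), if_pos rfl, if_true]
        ring
  -- Part 2 : homogeneous of degree 2
  have hz_hom : (pderiv 2 (∏ i ∈ Sgᶜ, l i)).IsHomogeneous 1 := by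
    rw [hz_eq]
    exact (((isHomogeneous_C _ a2).mul (hhom b)).add ((isHomogeneous_C _ b2).mul (hhom a)) :)
  have hprod_hom : (∏ i ∈ Sgᶜ, l i).IsHomogeneous 2 := by
    rw [hprod]; exact ((hhom a).mul (hhom b) :)
  have P2 : ∀ j : Fin 3,
      (X j * pderiv 2 (∏ i ∈ Sgᶜ, l i)
        - if j = 2 then (s : MvPolynomial (Fin 3) K) * ∏ i ∈ Sgᶜ, l i
          else 0).IsHomogeneous 2 := by
    intro j
    have hxz : (X j * pderiv 2 (∏ i ∈ Sgᶜ, l i)).IsHomogeneous 2 :=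
      ((isHomogeneous_X K j).mul hz_hom :)
    by_cases hj : j = 2
    · rw [if_pos hj]
      refine hxz.sub ?_
      have : (s : MvPolynomial (Fin 3) K) = C ((s : K)) := by
        rw [map_natCast]
      rw [this]
      exact ((isHomogeneous_C _ _).mul hprod_hom :)
    · rw [if_neg hj, sub_zero]; exact hxz
  -- Part 3 : not a multiple of the Euler derivation
  have P3 : ¬ ∃ c : MvPolynomial (Fin 3) K, ∀ j : Fin 3,
      (X j * pderiv 2 (∏ i ∈ Sgᶜ, l i)
        - if j = 2 then (s : MvPolynomial (Fin 3) K) * ∏ i ∈ Sgᶜ, l i else 0)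
        = c * X j := by
    rintro ⟨c, hc⟩
    have h0 := hc 0
    rw [if_neg (show (0 : Fin 3) ≠ 2 by decide), sub_zero] at h0
    have h2 := hc 2
    rw [if_pos rfl] at h2
    have hceq : pderiv 2 (∏ i ∈ Sgᶜ, l i) = c := by
      have hx : (pderiv 2 (∏ i ∈ Sgᶜ, l i) - c) * X 0 = 0 := by linear_combination h0
      rcases mul_eq_zero.mp hx with h | h
      · exact sub_eq_zero.mp h
      · exact absurd h (X_ne_zero 0)
    have hz0 : (s : MvPolynomial (Fin 3) K) * ∏ i ∈ Sgᶜ, l i = 0 := by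
      rw [hceq] at h2
      linear_combination -h2
    exact mul_ne_zero hs_ne hprod_ne hz0
  exact ⟨P1, P2, P3, Nat.sInf_le ⟨_, P2, P1, P3⟩⟩
end
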